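/- arXiv:0912.5273 — 2 statements merged into one kernel-verified Lean document; each statement's English description precedes it below -/
import Mathlib

section
/- Let A be a commutative ring with unity and D : A → A a derivation. The set D⁻ of formal sums ∑_{i ≤ N} f_i D^i (f_i ∈ A, N ∈ ℤ) with the product A·B = ∑_{i,j} ∑_{r ≥ 0} C(i,r) f_i D^r(g_j) D^{i+j-r} is an associative ring: for each power D^s the coefficient in the product is a finite sum, and the product is associative. -/
/-!
Write the coefficient of `D^s` in `(f g) h` and in `f (g h)` as one finite sum over the indices
`i, j, k` of `f, g, h` and the number `a` of derivatives falling on `g_j`: if all coefficients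
vanish above `N`, only indices in `[s - 2N, N]` and at most `3N - s` derivatives contribute.
On the right the Leibniz rule distributes `D^r` over `g_j D^e(h_k)`, and collecting the terms
with the same number `c` of derivatives on `h_k` leaves the Chu–Vandermonde sum
`∑_b C(a+b, a) C(i, a+b) C(j, c-b) = C(i, a) C(i-a+j, c)`, the coefficient found on the left.
-/

open scoped BigOperators

/-- Generalized binomial coefficient `C(i,r) = i(i-1)⋯(i-r+1)/r!` for `i : ℤ`, `r : ℕ`. -/
noncomputable def zchoose (i : ℤ) (r : ℕ) : ℤ :=
  (∏ k ∈ Finset.range r, (i - (k : ℤ))) / (r.factorial : ℤ)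

/-- A derivation of a commutative ring: additive and Leibniz. -/
def IsDeriv {A : Type*} [CommRing A] (d : A → A) : Prop :=
  (∀ x y, d (x + y) = d x + d y) ∧ (∀ x y, d (x * y) = d x * y + x * d y)

section FirstType

variable {A : Type*} [CommRing A]

/-- Coefficients supported on `{i ≤ N}` for some `N`: pseudo-differential operators of the
first type `∑_{i ≤ N} f_i D^i` are represented by their coefficient functions `ℤ → A`. -/
def BddAboveSupp (f : ℤ → A) : Prop := ∃ N : ℤ, ∀ i : ℤ, N < i → f i = 0

/-- Coefficient of `D^s` in the product `(∑ f_i D^i)·(∑ g_j D^j)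
 = ∑_{i,j,r≥0} C(i,r) f_i D^r(g_j) D^{i+j-r}` (here `r = i + j - s ≥ 0`). -/
noncomputable def mulM (d : A → A) (f g : ℤ → A) : ℤ → A :=
  fun s => ∑ᶠ p : ℤ × ℤ,
    if s ≤ p.1 + p.2 then
      zchoose p.1 (p.1 + p.2 - s).toNat • (f p.1 * d^[(p.1 + p.2 - s).toNat] (g p.2))
    else 0

def oneM : ℤ → A := fun i => if i = 0 then 1 else 0

noncomputable def powM (d : A → A) (f : ℤ → A) : ℕ → ℤ → A
  | 0 => oneM
  | n + 1 => mulM d f (powM d f n)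

/-- Formal adjoint `(∑ f_i D^i)* = ∑ (-1)^i D^i ∘ f_i` in coefficient form. -/
noncomputable def adjM (d : A → A) (f : ℤ → A) : ℤ → A :=
  fun s => ∑ᶠ r : ℕ,
    (if Even (s + (r : ℤ)) then zchoose (s + (r : ℤ)) r else -zchoose (s + (r : ℤ)) r) •
      d^[r] (f (s + (r : ℤ)))

/-- Nonnegative (differential-operator) part. -/
def posM (f : ℤ → A) : ℤ → A := fun i => if 0 ≤ i then f i else 0

/-- Strictly negative part. -/
def negM (f : ℤ → A) : ℤ → A := fun i => if i < 0 then f i else 0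

/-- Action of a differential operator `∑_{i ≥ 0} f_i D^i` on an element of `A`. -/
noncomputable def actM (d : A → A) (f : ℤ → A) (x : A) : A :=
  ∑ᶠ i : ℕ, f (i : ℤ) * d^[i] x

/-- The monomial `D^k`. -/
def Dk (k : ℤ) : ℤ → A := fun i => if i = k then 1 else 0

/-- `D^{-1}`. -/
def Dinv : ℤ → A := Dk (-1)

/-- A scalar `u ∈ A` viewed as an operator of order `0`. -/
def cst (u : A) : ℤ → A := fun i => if i = 0 then u else 0

/-- The Drinfeld–Sokolov operator
`L = D^{2n-2} + ∑_{i=1}^{n-1} D^{-1}(u^i D^{2i-1} + D^{2i-1} u^i) + D^{-1} ρ D^{-1} ρ`. -/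
noncomputable def LM (d : A → A) (n : ℕ) (u : Fin (n - 1) → A) (ρ : A) : ℤ → A :=
  fun s =>
    Dk (2 * (n : ℤ) - 2) s
      + (∑ i : Fin (n - 1),
          mulM d Dinv
            (fun t => mulM d (cst (u i)) (Dk (2 * ((i : ℕ) : ℤ) + 1)) t
                + mulM d (Dk (2 * ((i : ℕ) : ℤ) + 1)) (cst (u i)) t) s)
      + mulM d Dinv (mulM d (cst ρ) (mulM d Dinv (cst ρ))) s

end FirstType

section SecondType

variable {A : Type*} [CommRing A]

/-- Operators over a graded ring, in bi-graded coefficient form: `a i j` is the coefficient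
of `D^i` lying in the degree-`j` graded component, so the operator is `∑_{i,j} a_{i,j} D^i`. -/
abbrev OpC (A : Type*) := ℤ → ℕ → A

/-- Product of operators in bi-graded coefficient form:
`A·B = ∑ C(i,r) a_{i,p} D^r(b_{j,q}) D^{i+j-r}`; the `(s,t)` coefficient collects
`i + j - r = s` and `p + r + q = t`. -/
noncomputable def mulO (d : A → A) (a b : OpC A) : OpC A :=
  fun s t => ∑ᶠ (i : ℤ) (p : ℕ) (r : ℕ) (q : ℕ),
    if p + r + q = t then zchoose i r • (a i p * d^[r] (b (s + (r : ℤ) - i) q)) else 0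

def oneO : OpC A := fun i j => if i = 0 ∧ j = 0 then 1 else 0

noncomputable def powO (d : A → A) (a : OpC A) : ℕ → OpC A
  | 0 => oneO
  | n + 1 => mulO d a (powO d a n)

/-- Formal adjoint `A* = ∑ (-1)^i D^i ∘ a_{i,j}` in bi-graded coefficient form. -/
noncomputable def adjO (d : A → A) (a : OpC A) : OpC A :=
  fun s t => ∑ r ∈ Finset.range (t + 1),
    (if Even (s + (r : ℤ)) then zchoose (s + (r : ℤ)) r else -zchoose (s + (r : ℤ)) r) •
      d^[r] (a (s + (r : ℤ)) (t - r))

def posO (a : OpC A) : OpC A := fun i j => if 0 ≤ i then a i j else 0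

def negO (a : OpC A) : OpC A := fun i j => if i < 0 then a i j else 0

def DkO (k : ℤ) : OpC A := fun i j => if i = k ∧ j = 0 then 1 else 0

def DopO : OpC A := DkO 1

def DinvO : OpC A := DkO (-1)

/-- A scalar, given by its graded components `fc j ∈ A_j`, as an operator of order `0`. -/
def scalarO (fc : ℕ → A) : OpC A := fun i j => if i = 0 then fc j else 0

/-- The components of `1 ∈ A`. -/
def unitC : ℕ → A := fun j => if j = 0 then (1 : A) else 0

/-- Action of a differential operator on an element of `A` given by graded components. -/
noncomputable def actO (d : A → A) (a : OpC A) (fc : ℕ → A) : ℕ → A :=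
  fun t => ∑ i ∈ Finset.range (t + 1), ∑ j ∈ Finset.range (t + 1), ∑ p ∈ Finset.range (t + 1),
    if i + j + p = t then a (i : ℤ) j * d^[i] (fc p) else 0

/-- Gradedness: `a i j` lies in the degree-`j` component. -/
def IsGradedO (𝒜 : ℕ → AddSubgroup A) (a : OpC A) : Prop := ∀ i j, a i j ∈ 𝒜 j

/-- Membership in `D⁺`: `∃ m`, support in `{(i,j) : j ≥ max(0, m - i)}`. -/
def InPlusO (a : OpC A) : Prop := ∃ m : ℤ, ∀ (i : ℤ) (j : ℕ), (j : ℤ) < m - i → a i j = 0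

/-- Membership in `D⁻`: `∃ N`, support in `{(i,j) : i ≤ N}`. -/
def InMinusO (a : OpC A) : Prop := ∃ N : ℤ, ∀ (i : ℤ) (j : ℕ), N < i → a i j = 0

/-- A differential operator: no negative powers of `D`. -/
def IsDiffOpO (a : OpC A) : Prop := ∀ i : ℤ, i < 0 → ∀ j, a i j = 0

/-- Apply a map (e.g. a time derivation) to all coefficients. -/
def opMapO {A : Type*} (e : A → A) (a : OpC A) : OpC A := fun i j => e (a i j)

/-- Commutator. -/
noncomputable def commO (d : A → A) (a b : OpC A) : OpC A :=
  fun i j => mulO d a b i j - mulO d b a i j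

/-- The Drinfeld–Sokolov operator `L` in bi-graded coefficient form. -/
noncomputable def LO (d : A → A) (n : ℕ) (uc : Fin (n - 1) → ℕ → A) (ρc : ℕ → A) : OpC A :=
  fun s t =>
    DkO (2 * (n : ℤ) - 2) s t
      + (∑ i : Fin (n - 1),
          mulO d DinvO
            (fun s' t' => mulO d (scalarO (uc i)) (DkO (2 * ((i : ℕ) : ℤ) + 1)) s' t'
                + mulO d (DkO (2 * ((i : ℕ) : ℤ) + 1)) (scalarO (uc i)) s' t') s t)
      + mulO d DinvO (mulO d (scalarO ρc) (mulO d DinvO (scalarO ρc))) s t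

end SecondType

open Finset

theorem zchoose_eq_choose (i : ℤ) (r : ℕ) : zchoose i r = Ring.choose i r := by
  rw [zchoose, ← descPochhammer_eval_eq_prod_range, Polynomial.eval_eq_smeval,
    Ring.descPochhammer_eq_factorial_smul_choose, nsmul_eq_mul]
  exact Int.mul_ediv_cancel_left _ (mod_cast r.factorial_ne_zero)

theorem Ring.sum_range_choose_mul_choose_mul_choose {R : Type*} [CommRing R] [BinomialRing R]
    (x y : R) (a c : ℕ) :
    ∑ b ∈ range (c + 1), ((a + b).choose a : R) * choose x (a + b) * choose y (c - b)
      = choose x a * choose (x - a + y) c := by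
  have hsplit (b : ℕ) :
      ((a + b).choose a : R) * choose x (a + b) = choose x a * choose (x - a) b := by
    simpa [nsmul_eq_mul] using choose_smul_choose x (Nat.le_add_right a b)
  simp only [hsplit, mul_assoc, ← mul_sum]
  rw [add_choose_eq c (Commute.all _ _), Nat.sum_antidiagonal_eq_sum_range_succ_mk]

theorem sum_zchoose_mul_zchoose_mul_choose {i j k s lo hi : ℤ} {a : ℕ} (hlo : lo ≤ s - i)
    (hhi : j + k ≤ hi) (hs : s ≤ i + j + k) (ha : a ≤ (i + j + k - s).toNat) :
    ∑ m ∈ Icc lo hi with s ≤ i + m ∧ m ≤ j + k ∧ a ≤ (i + m - s).toNat,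
        zchoose i (i + m - s).toNat * zchoose j (j + k - m).toNat *
          ((i + m - s).toNat.choose a : ℤ)
      = zchoose i a * zchoose (i - a + j) ((i + j + k - s).toNat - a) := by
  simp only [zchoose_eq_choose]
  rw [← Ring.sum_range_choose_mul_choose_mul_choose]
  refine sum_nbij' (fun m => (i + m - s).toNat - a) (fun b => s - i + a + b) ?_ ?_ ?_ ?_ ?_
  · intro m hm
    simp only [mem_filter, mem_Icc, mem_range] at hm ⊢
    omega
  · intro b hb
    simp only [mem_filter, mem_Icc, mem_range] at hb ⊢
    omega
  · intro m hm
    simp only [mem_filter, mem_Icc] at hm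
    omega
  · intro b _
    omega
  · intro m hm
    simp only [mem_filter, mem_Icc] at hm
    set b := (i + m - s).toNat - a
    rw [show (i + m - s).toNat = a + b by omega,
      show (j + k - m).toNat = (i + j + k - s).toNat - a - b by omega]
    ring

theorem Derivation.iterate_apply_mul {R A : Type*} [CommSemiring R] [CommSemiring A]
    [Algebra R A] (D : Derivation R A A) (n : ℕ) (x y : A) :
    D^[n] (x * y) = ∑ ij ∈ antidiagonal n, n.choose ij.1 • (D^[ij.1] x * D^[ij.2] y) := by
  induction n with
  | zero => simp
  | succ n ih =>
    rw [Finset.sum_antidiagonal_choose_succ_nsmul (fun i j => D^[i] x * D^[j] y) n]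
    simp only [Function.iterate_succ_apply', ih, map_sum, map_nsmul, leibniz, smul_eq_mul,
      smul_add, sum_add_distrib]
    congr 1
    refine sum_congr rfl fun ij hij => ?_
    rw [n.choose_symm_of_eq_add (mem_antidiagonal.1 hij).symm, mul_comm]

namespace IsDeriv

variable {A : Type*} [CommRing A] {d : A → A}

def toDerivation (hd : IsDeriv d) : Derivation ℤ A A :=
  Derivation.mk' (AddMonoidHom.mk' d hd.1).toIntLinearMap fun x y => by
    simp [hd.2 x y, mul_comm, add_comm]

variable (hd : IsDeriv d)
include hd

theorem coe_toDerivation : ⇑hd.toDerivation = d := rfl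

theorem iterate_eq_coe_pow (n : ℕ) : d^[n] = ⇑(hd.toDerivation.toLinearMap ^ n) := by
  rw [Module.End.coe_pow]; rfl

theorem iterate_map_zero (n : ℕ) : d^[n] 0 = 0 := by
  rw [hd.iterate_eq_coe_pow]; exact map_zero _

theorem iterate_map_zsmul (n : ℕ) (c : ℤ) (x : A) : d^[n] (c • x) = c • d^[n] x := by
  rw [hd.iterate_eq_coe_pow]; exact map_zsmul _ _ _

theorem iterate_map_sum {ι : Type*} (n : ℕ) (S : Finset ι) (F : ι → A) :
    d^[n] (∑ p ∈ S, F p) = ∑ p ∈ S, d^[n] (F p) := by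
  rw [hd.iterate_eq_coe_pow]; exact map_sum _ _ _

theorem iterate_map_mul {n R : ℕ} (hn : n < R) (x y : A) :
    d^[n] (x * y) = ∑ a ∈ range R, n.choose a • (d^[a] x * d^[n - a] y) := by
  rw [← hd.coe_toDerivation, Derivation.iterate_apply_mul,
    Nat.sum_antidiagonal_eq_sum_range_succ_mk]
  refine sum_subset (range_subset_range.2 hn) fun a _ ha => ?_
  rw [Nat.choose_eq_zero_of_lt (by simpa using ha), zero_smul]

end IsDeriv

section Product

variable {A : Type*} [CommRing A] {d : A → A}

noncomputable def mulSummand (d : A → A) (f g : ℤ → A) (s : ℤ) (p : ℤ × ℤ) : A :=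
  if s ≤ p.1 + p.2 then
    zchoose p.1 (p.1 + p.2 - s).toNat • (f p.1 * d^[(p.1 + p.2 - s).toNat] (g p.2))
  else 0

variable (hd : IsDeriv d) {f g : ℤ → A} {Nf Ng : ℤ}
  (hf : ∀ i, Nf < i → f i = 0) (hg : ∀ j, Ng < j → g j = 0)
include hd hf hg

theorem support_mulSummand_subset (s : ℤ) :
    Function.support (mulSummand d f g s) ⊆ ↑(Icc (s - Ng) Nf ×ˢ Icc (s - Nf) Ng) := by
  rintro ⟨i, j⟩ hp
  simp only [mulSummand, Function.mem_support, ne_eq, ite_eq_right_iff, not_forall] at hp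
  obtain ⟨hs, hne⟩ := hp
  have hi : i ≤ Nf := by
    by_contra hi
    exact hne (by rw [hf i (by omega), zero_mul, smul_zero])
  have hj : j ≤ Ng := by
    by_contra hj
    exact hne (by rw [hg j (by omega), hd.iterate_map_zero, mul_zero, smul_zero])
  simp only [coe_product, coe_Icc, Set.mem_prod, Set.mem_Icc]
  omega

theorem mulM_eq_sum (s : ℤ) {S : Finset (ℤ × ℤ)} (hS : Icc (s - Ng) Nf ×ˢ Icc (s - Nf) Ng ⊆ S) :
    mulM d f g s = ∑ p ∈ S, mulSummand d f g s p :=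
  finsum_eq_finsetSum_of_support_subset _
    ((support_mulSummand_subset hd hf hg s).trans (coe_subset.2 hS))

theorem mulM_eq_zero_of_lt {s : ℤ} (hs : Nf + Ng < s) : mulM d f g s = 0 := by
  rw [mulM_eq_sum hd hf hg s subset_rfl]
  refine sum_eq_zero fun p hp => ?_
  simp only [mem_product, mem_Icc] at hp
  omega

end Product

section Assoc

variable {A : Type*} [CommRing A] {d : A → A} {f g h : ℤ → A}

/-- Coefficient of `D^s` in `f g h` contributed by `f_i, g_j, h_k` when `a` of the
`n = i + j + k - s` derivatives land on `g_j` and the other `n - a` on `h_k`. -/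
noncomputable def tripleSummand (d : A → A) (f g h : ℤ → A) (s : ℤ) :
    (ℤ × ℤ × ℤ) × ℕ → A
  | ((i, j, k), a) =>
    if s ≤ i + j + k ∧ a ≤ (i + j + k - s).toNat then
      (zchoose i a * zchoose (i - a + j) ((i + j + k - s).toNat - a)) •
        (f i * (d^[a] (g j) * d^[(i + j + k - s).toNat - a] (h k)))
    else 0

noncomputable def tripleBox (N s : ℤ) : Finset ((ℤ × ℤ × ℤ) × ℕ) :=
  (Icc (s - 2 * N) N ×ˢ Icc (s - 2 * N) N ×ˢ Icc (s - 2 * N) N) ×ˢ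
    range ((3 * N - s).toNat + 1)

/-- Contributions to the coefficient of `D^s`: `leftSummand (m, k) (i, j)` to that of `(f g) h`,
from `h_k` and the part `f_i g_j` of `(f g)_m`; `rightSummand (i, m) (j, k) a` to that of
`f (g h)`, from `f_i` and the part `g_j h_k` of `(g h)_m`, with `a` of the derivatives coming
from `f_i` landing on `g_j`. -/
noncomputable def leftSummand (d : A → A) (f g h : ℤ → A) (s : ℤ) : ℤ × ℤ → ℤ × ℤ → A
  | (m, k), (i, j) =>
    if s ≤ m + k ∧ m ≤ i + j then
      (zchoose m (m + k - s).toNat * zchoose i (i + j - m).toNat) •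
        (f i * (d^[(i + j - m).toNat] (g j) * d^[(m + k - s).toNat] (h k)))
    else 0

noncomputable def rightSummand (d : A → A) (f g h : ℤ → A) (s : ℤ) :
    ℤ × ℤ → ℤ × ℤ → ℕ → A
  | (i, m), (j, k), a =>
    if s ≤ i + m ∧ m ≤ j + k ∧ a ≤ (i + m - s).toNat then
      (zchoose i (i + m - s).toNat * zchoose j (j + k - m).toNat *
          ((i + m - s).toNat.choose a : ℤ)) •
        (f i * (d^[a] (g j) * d^[(i + m - s).toNat - a + (j + k - m).toNat] (h k)))
    else 0

theorem sum_leftSummand_eq_sum_tripleSummand (N s : ℤ) :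
    ∑ p ∈ Icc (s - N) (2 * N) ×ˢ Icc (s - 2 * N) N,
        ∑ q ∈ Icc (s - 2 * N) N ×ˢ Icc (s - 2 * N) N, leftSummand d f g h s p q
      = ∑ x ∈ tripleBox N s, tripleSummand d f g h s x := by
  rw [← sum_product', tripleBox]
  conv_lhs => rw [← sum_filter_of_ne (p := fun z => s ≤ z.1.1 + z.1.2 ∧ z.1.1 ≤ z.2.1 + z.2.2)
    fun ⟨⟨m, k⟩, ⟨i, j⟩⟩ _ hz => by by_contra hc; exact hz (if_neg hc)]
  conv_rhs => rw [← sum_filter_of_ne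
    (p := fun x => s ≤ x.1.1 + x.1.2.1 + x.1.2.2 ∧ x.2 ≤ (x.1.1 + x.1.2.1 + x.1.2.2 - s).toNat)
    fun ⟨⟨i, j, k⟩, a⟩ _ hx => by by_contra hc; exact hx (if_neg hc)]
  refine sum_nbij'
    (fun z => ((z.2.1, z.2.2, z.1.2), (z.2.1 + z.2.2 - z.1.1).toNat))
    (fun x => ((x.1.1 + x.1.2.1 - x.2, x.1.2.2), (x.1.1, x.1.2.1))) ?_ ?_ ?_ ?_ ?_
  · rintro ⟨⟨m, k⟩, ⟨i, j⟩⟩ hz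
    simp only [mem_filter, mem_product, mem_Icc, mem_range] at hz ⊢
    omega
  · rintro ⟨⟨i, j, k⟩, a⟩ hx
    simp only [mem_filter, mem_product, mem_Icc, mem_range] at hx ⊢
    omega
  · rintro ⟨⟨m, k⟩, ⟨i, j⟩⟩ hz
    simp only [mem_filter, mem_product, mem_Icc] at hz
    simp only [Prod.mk.injEq, and_true]
    omega
  · rintro ⟨⟨i, j, k⟩, a⟩ hx
    simp only [mem_filter, mem_product, mem_Icc, mem_range] at hx
    simp only [Prod.mk.injEq, true_and]
    omega
  · rintro ⟨⟨m, k⟩, ⟨i, j⟩⟩ hz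
    simp only [mem_filter, mem_product, mem_Icc] at hz
    have hm : i - ((i + j - m).toNat : ℤ) + j = m := by omega
    have hn : (i + j + k - s).toNat - (i + j - m).toNat = (m + k - s).toNat := by omega
    dsimp only
    rw [leftSummand, tripleSummand, if_pos hz.2, if_pos (by omega), hm, hn,
      mul_comm (zchoose m _)]

theorem sum_rightSummand_eq_tripleSummand {N s i j k : ℤ} (a : ℕ) (hi : i ≤ N) (hj : j ≤ N)
    (hk : k ≤ N) :
    ∑ m ∈ Icc (s - N) (2 * N), rightSummand d f g h s (i, m) (j, k) a
      = tripleSummand d f g h s ((i, j, k), a) := by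
  have hterm (m : ℤ) : rightSummand d f g h s (i, m) (j, k) a
      = (if s ≤ i + m ∧ m ≤ j + k ∧ a ≤ (i + m - s).toNat then
          zchoose i (i + m - s).toNat * zchoose j (j + k - m).toNat *
            ((i + m - s).toNat.choose a : ℤ)
        else 0) • (f i * (d^[a] (g j) * d^[(i + j + k - s).toNat - a] (h k))) := by
    rw [rightSummand]
    split_ifs with hc
    · rw [show (i + m - s).toNat - a + (j + k - m).toNat = (i + j + k - s).toNat - a by omega]
    · rw [zero_smul]
  rw [sum_congr rfl fun m _ => hterm m, ← sum_smul, ← sum_filter, tripleSummand]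
  split_ifs with hc
  · rw [sum_zchoose_mul_zchoose_mul_choose (by omega) (by omega) hc.1 hc.2]
  · rw [sum_eq_zero fun m hm => absurd (by simp only [mem_filter] at hm; omega) hc, zero_smul]

variable (hd : IsDeriv d) {N : ℤ}
include hd

theorem mulSummand_mulM_left_eq_sum (hf : ∀ i, N < i → f i = 0) (hg : ∀ j, N < j → g j = 0)
    {s m : ℤ} (hm : s - N ≤ m) (k : ℤ) :
    mulSummand d (mulM d f g) h s (m, k)
      = ∑ q ∈ Icc (s - 2 * N) N ×ˢ Icc (s - 2 * N) N, leftSummand d f g h s (m, k) q := by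
  rw [mulSummand]
  dsimp only
  split_ifs with hs
  · have hbox : Icc (m - N) N ⊆ Icc (s - 2 * N) N := Icc_subset_Icc (by omega) le_rfl
    rw [mulM_eq_sum hd hf hg m (product_subset_product hbox hbox), sum_mul, smul_sum]
    refine sum_congr rfl fun ⟨i, j⟩ _ => ?_
    rw [mulSummand, leftSummand]
    dsimp only
    by_cases hij : m ≤ i + j
    · rw [if_pos hij, if_pos ⟨hs, hij⟩, smul_mul_assoc, smul_smul, mul_assoc]
    · rw [if_neg hij, if_neg fun hc => hij hc.2, zero_mul, smul_zero]
  · exact (sum_eq_zero fun ⟨i, j⟩ _ => if_neg fun hc => hs hc.1).symm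

theorem mulM_mulM_left_eq_sum (hf : ∀ i, N < i → f i = 0) (hg : ∀ j, N < j → g j = 0)
    (hh : ∀ k, N < k → h k = 0) (s : ℤ) :
    mulM d (mulM d f g) h s = ∑ x ∈ tripleBox N s, tripleSummand d f g h s x := by
  have hfg : ∀ m, 2 * N < m → mulM d f g m = 0 :=
    fun m hm => mulM_eq_zero_of_lt hd hf hg (by omega)
  rw [mulM_eq_sum hd hfg hh s subset_rfl, ← sum_leftSummand_eq_sum_tripleSummand]
  refine sum_congr rfl fun ⟨m, k⟩ hp => mulSummand_mulM_left_eq_sum hd hf hg ?_ k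
  simp only [mem_product, mem_Icc] at hp
  omega

theorem mulSummand_mulM_right_eq_sum (hg : ∀ j, N < j → g j = 0) (hh : ∀ k, N < k → h k = 0)
    {s i m : ℤ} (hi : i ≤ N) (hm : s - N ≤ m ∧ m ≤ 2 * N) :
    mulSummand d f (mulM d g h) s (i, m)
      = ∑ q ∈ Icc (s - 2 * N) N ×ˢ Icc (s - 2 * N) N,
          ∑ a ∈ range ((3 * N - s).toNat + 1), rightSummand d f g h s (i, m) q a := by
  rw [mulSummand]
  dsimp only
  split_ifs with hs
  · have hbox : Icc (m - N) N ⊆ Icc (s - 2 * N) N := Icc_subset_Icc (by omega) le_rfl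
    rw [mulM_eq_sum hd hg hh m (product_subset_product hbox hbox), hd.iterate_map_sum, mul_sum,
      smul_sum]
    refine sum_congr rfl fun ⟨j, k⟩ _ => ?_
    rw [mulSummand]
    dsimp only
    by_cases hjk : m ≤ j + k
    · rw [if_pos hjk, hd.iterate_map_zsmul, hd.iterate_map_mul (R := (3 * N - s).toNat + 1)
        (by omega), smul_sum, mul_sum, smul_sum]
      refine sum_congr rfl fun a _ => ?_
      rw [rightSummand]
      by_cases ha : a ≤ (i + m - s).toNat
      · rw [if_pos ⟨hs, hjk, ha⟩, Function.iterate_add_apply, mul_smul_comm, mul_smul_comm,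
          ← natCast_zsmul, smul_smul, smul_smul]
      · rw [if_neg fun hc => ha hc.2.2, Nat.choose_eq_zero_of_lt (by omega), zero_smul,
          smul_zero, mul_zero, smul_zero]
    · rw [if_neg hjk, hd.iterate_map_zero, mul_zero, smul_zero]
      exact (sum_eq_zero fun a _ => if_neg fun hc => hjk hc.2.1).symm
  · exact (sum_eq_zero fun q _ => sum_eq_zero fun a _ => if_neg fun hc => hs hc.1).symm

theorem mulM_mulM_right_eq_sum (hf : ∀ i, N < i → f i = 0) (hg : ∀ j, N < j → g j = 0)
    (hh : ∀ k, N < k → h k = 0) (s : ℤ) :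
    mulM d f (mulM d g h) s = ∑ x ∈ tripleBox N s, tripleSummand d f g h s x := by
  have hgh : ∀ m, 2 * N < m → mulM d g h m = 0 :=
    fun m hm => mulM_eq_zero_of_lt hd hg hh (by omega)
  rw [mulM_eq_sum hd hf hgh s subset_rfl, sum_product, tripleBox, sum_product, sum_product]
  refine sum_congr rfl fun i hi => ?_
  rw [mem_Icc] at hi
  rw [sum_congr rfl fun m hm => mulSummand_mulM_right_eq_sum hd hg hh hi.2 (mem_Icc.1 hm),
    sum_comm]
  refine sum_congr rfl fun ⟨j, k⟩ hq => ?_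
  simp only [mem_product, mem_Icc] at hq
  rw [sum_comm]
  exact sum_congr rfl fun a _ => sum_rightSummand_eq_tripleSummand a hi.2 hq.1.2 hq.2.2

theorem mulM_assoc (hf : ∀ i, N < i → f i = 0) (hg : ∀ j, N < j → g j = 0)
    (hh : ∀ k, N < k → h k = 0) : mulM d (mulM d f g) h = mulM d f (mulM d g h) := by
  funext s
  rw [mulM_mulM_left_eq_sum hd hf hg hh, mulM_mulM_right_eq_sum hd hf hg hh]

end Assoc

/-- Pseudo-differential operators of the first type over a commutative ring `A`
with a derivation `D` form an associative ring: for each power `D^s` the coefficient of the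
product is a finite sum of elements of `A`, operators with coefficient support bounded above
are closed under the product, and the product is associative. -/
theorem pdo_first_type_is_ring {A : Type*} [CommRing A] (d : A → A) (hd : IsDeriv d) :
    (∀ f g : ℤ → A, BddAboveSupp f → BddAboveSupp g → ∀ s : ℤ,
      (Function.support fun p : ℤ × ℤ =>
        if s ≤ p.1 + p.2 then
          zchoose p.1 (p.1 + p.2 - s).toNat • (f p.1 * d^[(p.1 + p.2 - s).toNat] (g p.2))
        else 0).Finite)
    ∧ (∀ f g : ℤ → A, BddAboveSupp f → BddAboveSupp g → BddAboveSupp (mulM d f g))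
    ∧ (∀ f g h : ℤ → A, BddAboveSupp f → BddAboveSupp g → BddAboveSupp h →
        mulM d (mulM d f g) h = mulM d f (mulM d g h)) := by
  refine ⟨?_, ?_, ?_⟩
  · rintro f g ⟨Nf, hf⟩ ⟨Ng, hg⟩ s
    exact (finite_toSet _).subset (support_mulSummand_subset hd hf hg s)
  · rintro f g ⟨Nf, hf⟩ ⟨Ng, hg⟩
    exact ⟨Nf + Ng, fun s => mulM_eq_zero_of_lt hd hf hg⟩
  · rintro f g h ⟨Nf, hf⟩ ⟨Ng, hg⟩ ⟨Nh, hh⟩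
    exact mulM_assoc (N := max Nf (max Ng Nh)) hd (fun i hi => hf i (by omega))
      (fun j hj => hg j (by omega)) (fun k hk => hh k (by omega))
end

section
/- With Δ defined as Δ(R) = a − αᵗR₁^{-1}β for R = [[αᵗ,a],[R₁,β]] with R₁ invertible: (a) for any upper triangular matrix Ñ ∈ R^{m×m} with unity on the main diagonal, Δ(ÑRÑ^{-1}) = Δ(R); (b) if * is an anti-isomorphism of R and T is the anti-isomorphism of R^{m×m} defined by (R^T)_{ij} = R*_{m+1-j, m+1-i}, then Δ(R^T) = Δ(R)*. -/
open scoped BigOperators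

/-- `Δ(R) = a - αᵗ R₁⁻¹ β` for the block form `R = [[αᵗ, a],[R₁, β]]`, where `R1inv` is the
inverse of the lower-left block `R₁`. -/
noncomputable def DeltaOf {S : Type*} [Ring S] (m : ℕ)
    (R : Matrix (Fin (m + 1)) (Fin (m + 1)) S) (R1inv : Matrix (Fin m) (Fin m) S) : S :=
  R 0 (Fin.last m)
    - ∑ i : Fin m, ∑ j : Fin m, R 0 i.castSucc * R1inv i j * R j.succ (Fin.last m)

/-!
`Δ(R)` is the first entry of `R w` for any `w` with last entry `1` that `R` maps onto the first
coordinate axis; such a `w` exists and is forced to be `(-R₁⁻¹β, 1)`. For a unitriangular `N`,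
`N w` again has last entry `1`, and `(N R N⁻¹)(N w) = N (Δ e₀) = Δ e₀`, so `Δ` is unchanged; the
lower-left block of `N R N⁻¹` is `N₂₂ R₁ (N⁻¹)₁₁`, a product of invertible blocks.
The antidiagonal transpose reverses products, carries `R₁` to `R₁ᵀ`, and turns the sum defining
`Δ(R)` into `σ` of itself after reindexing by `i ↦ m - 1 - i`.
-/

theorem mul_mul_mul_eq_one {M : Type*} [Monoid M] {a a' b b' x y : M}
    (ha : a * a' = 1) (hx : x * y = 1) (hb : b * b' = 1) : a * x * b * (b' * y * a') = 1 := by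
  simp only [mul_assoc]
  rw [← mul_assoc b b', hb, one_mul, ← mul_assoc x y, hx, one_mul, ha]

namespace Matrix

variable {S : Type*} [Ring S]

theorem IsUpperTriangular.of_mul_eq_one {n : Type*} [Fintype n] [LinearOrder n]
    {M N : Matrix n n S} (hN : N.IsUpperTriangular) (hN1 : ∀ i, N i i = 1) (h : M * N = 1) :
    M.IsUpperTriangular := by
  intro i j
  induction j using WellFoundedLT.induction generalizing i with
  | ind j ih =>
    intro hji
    have hMN : (M * N) i j = 0 := by rw [h, one_apply_ne (ne_of_gt hji : i ≠ j)]
    rwa [mul_apply, Finset.sum_eq_single j, hN1, mul_one] at hMN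
    · intro k _ hkj
      rcases lt_or_gt_of_ne hkj with hk | hk
      · rw [ih k hk (hk.trans hji), zero_mul]
      · rw [hN hk, mul_zero]
    · simp

section FinSucc

variable {m : ℕ}

theorem IsUpperTriangular.submatrix_succ_mul {κ κ' : Type*}
    {A : Matrix (Fin (m + 1)) (Fin (m + 1)) S} (hA : A.IsUpperTriangular)
    (B : Matrix (Fin (m + 1)) κ S) (c : κ' → κ) :
    (A * B).submatrix Fin.succ c = A.submatrix Fin.succ Fin.succ * B.submatrix Fin.succ c := by
  ext i j
  have hA0 : A i.succ 0 = 0 := hA (Fin.succ_pos i)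
  simp [mul_apply, Fin.sum_univ_succ, hA0]

theorem IsUpperTriangular.mul_submatrix_castSucc {κ κ' : Type*}
    (A : Matrix κ (Fin (m + 1)) S) {B : Matrix (Fin (m + 1)) (Fin (m + 1)) S}
    (hB : B.IsUpperTriangular) (r : κ' → κ) :
    (A * B).submatrix r Fin.castSucc
      = A.submatrix r Fin.castSucc * B.submatrix Fin.castSucc Fin.castSucc := by
  ext i j
  have hB0 : B (Fin.last m) j.castSucc = 0 := hB (Fin.castSucc_lt_last j)
  simp [mul_apply, Fin.sum_univ_castSucc, hB0]

theorem IsUpperTriangular.submatrix_succ_mul_eq_one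
    {A B : Matrix (Fin (m + 1)) (Fin (m + 1)) S} (hA : A.IsUpperTriangular) (h : A * B = 1) :
    A.submatrix Fin.succ Fin.succ * B.submatrix Fin.succ Fin.succ = 1 := by
  rw [← hA.submatrix_succ_mul, h, submatrix_one _ (Fin.succ_injective _)]

theorem IsUpperTriangular.submatrix_castSucc_mul_eq_one
    {A B : Matrix (Fin (m + 1)) (Fin (m + 1)) S} (hB : B.IsUpperTriangular) (h : A * B = 1) :
    A.submatrix Fin.castSucc Fin.castSucc * B.submatrix Fin.castSucc Fin.castSucc = 1 := by
  rw [← hB.mul_submatrix_castSucc, h, submatrix_one _ (Fin.castSucc_injective _)]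

theorem submatrix_succ_castSucc_conj {N N' : Matrix (Fin (m + 1)) (Fin (m + 1)) S}
    (hN : N.IsUpperTriangular) (hN' : N'.IsUpperTriangular)
    (R : Matrix (Fin (m + 1)) (Fin (m + 1)) S) :
    (N * R * N').submatrix Fin.succ Fin.castSucc
      = N.submatrix Fin.succ Fin.succ * R.submatrix Fin.succ Fin.castSucc
          * N'.submatrix Fin.castSucc Fin.castSucc := by
  rw [hN'.mul_submatrix_castSucc, hN.submatrix_succ_mul]

theorem IsUpperTriangular.mulVec_apply_last {N : Matrix (Fin (m + 1)) (Fin (m + 1)) S}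
    (hN : N.IsUpperTriangular) (hN1 : N (Fin.last m) (Fin.last m) = 1) (v : Fin (m + 1) → S) :
    (N *ᵥ v) (Fin.last m) = v (Fin.last m) := by
  have hN0 (k : Fin m) : N (Fin.last m) k.castSucc = 0 := hN (Fin.castSucc_lt_last k)
  simp [mulVec, dotProduct, Fin.sum_univ_castSucc, hN0, hN1]

theorem IsUpperTriangular.mulVec_eq_self {N : Matrix (Fin (m + 1)) (Fin (m + 1)) S}
    (hN : N.IsUpperTriangular) (hN1 : N 0 0 = 1) {x : Fin (m + 1) → S}
    (hx : ∀ j : Fin m, x j.succ = 0) : N *ᵥ x = x := by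
  ext i
  cases i using Fin.cases with
  | zero => simp [mulVec, dotProduct, Fin.sum_univ_succ, hx, hN1]
  | succ i =>
    have hN0 : N i.succ 0 = 0 := hN (Fin.succ_pos i)
    simp [mulVec, dotProduct, Fin.sum_univ_succ, hx, hN0]

end FinSucc

def antidiagTranspose {α : Type*} {n : ℕ} (σ : α → α) (A : Matrix (Fin n) (Fin n) α) :
    Matrix (Fin n) (Fin n) α :=
  of fun i j => σ (A j.rev i.rev)

theorem antidiagTranspose_submatrix_succ_castSucc {α : Type*} {m : ℕ} (σ : α → α)
    (R : Matrix (Fin (m + 1)) (Fin (m + 1)) α) :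
    (antidiagTranspose σ R).submatrix Fin.succ Fin.castSucc
      = antidiagTranspose σ (R.submatrix Fin.succ Fin.castSucc) := by
  ext i j
  simp [antidiagTranspose, Fin.rev_succ, Fin.rev_castSucc]

theorem antidiagTranspose_mul {n : ℕ} (σ : S →+ S) (hσ : ∀ x y, σ (x * y) = σ y * σ x)
    (A B : Matrix (Fin n) (Fin n) S) :
    antidiagTranspose σ (A * B) = antidiagTranspose σ B * antidiagTranspose σ A := by
  ext i j
  simp only [antidiagTranspose, of_apply, mul_apply, map_sum, hσ]
  exact Fintype.sum_equiv Fin.revPerm _ _ fun k => by simp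

theorem antidiagTranspose_one {n : ℕ} (σ : S →+ S) (hσ1 : σ 1 = 1) :
    antidiagTranspose σ (1 : Matrix (Fin n) (Fin n) S) = 1 := by
  ext i j
  simp [antidiagTranspose, one_apply, apply_ite σ, hσ1, eq_comm]

theorem antidiagTranspose_mul_eq_one {n : ℕ} (σ : S →+ S)
    (hσ : ∀ x y, σ (x * y) = σ y * σ x) (hσ1 : σ 1 = 1) {A B : Matrix (Fin n) (Fin n) S}
    (h : A * B = 1) :
    antidiagTranspose σ B * antidiagTranspose σ A = 1 := by
  rw [← antidiagTranspose_mul σ hσ, h, antidiagTranspose_one σ hσ1]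

end Matrix

open Matrix

section Delta

variable {S : Type*} [Ring S] {m : ℕ}

theorem deltaOf_eq_sub_dotProduct (Q : Matrix (Fin (m + 1)) (Fin (m + 1)) S)
    (Q1inv : Matrix (Fin m) (Fin m) S) :
    DeltaOf m Q Q1inv = Q 0 (Fin.last m)
      - (fun i => Q 0 i.castSucc) ⬝ᵥ (Q1inv *ᵥ fun j => Q j.succ (Fin.last m)) := by
  simp [DeltaOf, dotProduct, mulVec, Finset.mul_sum, mul_assoc]

theorem mulVec_apply_eq_of_last_eq_one (Q : Matrix (Fin (m + 1)) (Fin (m + 1)) S)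
    {w : Fin (m + 1) → S} (hw : w (Fin.last m) = 1) (i : Fin (m + 1)) :
    (Q *ᵥ w) i
      = (fun k : Fin m => Q i k.castSucc) ⬝ᵥ (fun k : Fin m => w k.castSucc)
        + Q i (Fin.last m) := by
  simp [mulVec, dotProduct, Fin.sum_univ_castSucc, hw]

theorem deltaOf_eq_mulVec_apply_zero {Q : Matrix (Fin (m + 1)) (Fin (m + 1)) S}
    {Q1inv : Matrix (Fin m) (Fin m) S} (hQ1 : Q1inv * Q.submatrix Fin.succ Fin.castSucc = 1)
    {w : Fin (m + 1) → S} (hw : w (Fin.last m) = 1) (hQw : ∀ j : Fin m, (Q *ᵥ w) j.succ = 0) :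
    DeltaOf m Q Q1inv = (Q *ᵥ w) 0 := by
  have hQ1w : Q.submatrix Fin.succ Fin.castSucc *ᵥ (fun k : Fin m => w k.castSucc)
      = -fun j => Q j.succ (Fin.last m) := by
    ext j
    have := hQw j
    rw [mulVec_apply_eq_of_last_eq_one Q hw] at this
    exact eq_neg_of_add_eq_zero_left this
  have hw' : (fun k : Fin m => w k.castSucc) = -(Q1inv *ᵥ fun j => Q j.succ (Fin.last m)) := by
    rw [← mulVec_neg, ← hQ1w, mulVec_mulVec, hQ1, one_mulVec]
  rw [mulVec_apply_eq_of_last_eq_one Q hw, hw', dotProduct_neg, deltaOf_eq_sub_dotProduct]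
  abel

def deltaVec (Q : Matrix (Fin (m + 1)) (Fin (m + 1)) S) (Q1inv : Matrix (Fin m) (Fin m) S) :
    Fin (m + 1) → S :=
  Fin.snoc (-(Q1inv *ᵥ fun j => Q j.succ (Fin.last m))) 1

theorem deltaVec_last (Q : Matrix (Fin (m + 1)) (Fin (m + 1)) S)
    (Q1inv : Matrix (Fin m) (Fin m) S) : deltaVec Q Q1inv (Fin.last m) = 1 :=
  Fin.snoc_last _ _

theorem mulVec_deltaVec_succ {Q : Matrix (Fin (m + 1)) (Fin (m + 1)) S}
    {Q1inv : Matrix (Fin m) (Fin m) S} (hQ1 : Q.submatrix Fin.succ Fin.castSucc * Q1inv = 1)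
    (j : Fin m) : (Q *ᵥ deltaVec Q Q1inv) j.succ = 0 := by
  have hQ1v : Q.submatrix Fin.succ Fin.castSucc *ᵥ -(Q1inv *ᵥ fun l => Q l.succ (Fin.last m))
      = -fun l => Q l.succ (Fin.last m) := by
    rw [mulVec_neg, mulVec_mulVec, hQ1, one_mulVec]
  have hj : (fun k : Fin m => Q j.succ k.castSucc)
      ⬝ᵥ -(Q1inv *ᵥ fun l => Q l.succ (Fin.last m)) = -Q j.succ (Fin.last m) := congrFun hQ1v j
  have hv : (fun k : Fin m => deltaVec Q Q1inv k.castSucc)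
      = -(Q1inv *ᵥ fun l => Q l.succ (Fin.last m)) :=
    funext fun k => Fin.snoc_castSucc (α := fun _ => S) ..
  rw [mulVec_apply_eq_of_last_eq_one Q (deltaVec_last Q Q1inv), hv, hj, neg_add_cancel]

theorem deltaOf_conj_of_isUpperTriangular {N Ninv R : Matrix (Fin (m + 1)) (Fin (m + 1)) S}
    {R1inv S1inv : Matrix (Fin m) (Fin m) S} (hN : N.IsUpperTriangular) (hN1 : ∀ i, N i i = 1)
    (hNinvN : Ninv * N = 1) (hR1 : R.submatrix Fin.succ Fin.castSucc * R1inv = 1)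
    (hR1' : R1inv * R.submatrix Fin.succ Fin.castSucc = 1)
    (hS1 : S1inv * (N * R * Ninv).submatrix Fin.succ Fin.castSucc = 1) :
    DeltaOf m (N * R * Ninv) S1inv = DeltaOf m R R1inv := by
  have hRv := mulVec_deltaVec_succ hR1
  have hconj : (N * R * Ninv) *ᵥ (N *ᵥ deltaVec R R1inv) = R *ᵥ deltaVec R R1inv := by
    rw [mulVec_mulVec, mul_assoc (N * R), hNinvN, mul_one, ← mulVec_mulVec,
      hN.mulVec_eq_self (hN1 0) hRv]
  have hw : (N *ᵥ deltaVec R R1inv) (Fin.last m) = 1 := by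
    rw [hN.mulVec_apply_last (hN1 _), deltaVec_last]
  rw [deltaOf_eq_mulVec_apply_zero hS1 hw (by simpa only [hconj] using hRv), hconj,
    deltaOf_eq_mulVec_apply_zero hR1' (deltaVec_last R R1inv) hRv]

theorem deltaOf_antidiagTranspose (σ : S →+ S) (hσ : ∀ x y, σ (x * y) = σ y * σ x)
    (R : Matrix (Fin (m + 1)) (Fin (m + 1)) S) (R1inv : Matrix (Fin m) (Fin m) S) :
    DeltaOf m (antidiagTranspose σ R) (antidiagTranspose σ R1inv) = σ (DeltaOf m R R1inv) := by
  simp only [DeltaOf, antidiagTranspose, of_apply, Fin.rev_zero, Fin.rev_last, Fin.rev_castSucc,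
    Fin.rev_succ, map_sub, map_sum, hσ, mul_assoc]
  congr 1
  rw [Finset.sum_comm]
  exact Fintype.sum_equiv Fin.revPerm _ _ fun i => Fintype.sum_equiv Fin.revPerm _ _ fun j => rfl

end Delta

theorem delta_invariance_general {S : Type*} [Ring S] (m : ℕ)
    (R : Matrix (Fin (m + 1)) (Fin (m + 1)) S)
    (R1inv : Matrix (Fin m) (Fin m) S)
    (hR1 : (Matrix.of fun i j : Fin m => R i.succ j.castSucc) * R1inv = 1)
    (hR1' : R1inv * (Matrix.of fun i j : Fin m => R i.succ j.castSucc) = 1) :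
    (∀ (N Ninv : Matrix (Fin (m + 1)) (Fin (m + 1)) S),
      (∀ i j : Fin (m + 1), j < i → N i j = 0) → (∀ i, N i i = 1) →
      N * Ninv = 1 → Ninv * N = 1 →
      ∃ S1inv : Matrix (Fin m) (Fin m) S,
        (Matrix.of fun i j : Fin m => (N * R * Ninv) i.succ j.castSucc) * S1inv = 1
        ∧ S1inv * (Matrix.of fun i j : Fin m => (N * R * Ninv) i.succ j.castSucc) = 1
        ∧ DeltaOf m (N * R * Ninv) S1inv = DeltaOf m R R1inv)
    ∧ (∀ σ : S → S, Function.Bijective σ → (∀ x y, σ (x + y) = σ x + σ y) →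
        (∀ x y, σ (x * y) = σ y * σ x) → σ 1 = 1 →
      ∃ T1inv : Matrix (Fin m) (Fin m) S,
        (Matrix.of fun i j : Fin m =>
            (Matrix.of fun i' j' : Fin (m + 1) => σ (R j'.rev i'.rev)) i.succ j.castSucc)
          * T1inv = 1
        ∧ T1inv * (Matrix.of fun i j : Fin m =>
            (Matrix.of fun i' j' : Fin (m + 1) => σ (R j'.rev i'.rev)) i.succ j.castSucc) = 1
        ∧ DeltaOf m (Matrix.of fun i' j' : Fin (m + 1) => σ (R j'.rev i'.rev)) T1inv
            = σ (DeltaOf m R R1inv)) := by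
  refine ⟨fun N Ninv hN hN1 hNNinv hNinvN => ?_, fun σ _ hadd hσ hσ1 => ?_⟩
  · have hN' : N.IsUpperTriangular := fun i j h => hN i j h
    have hNinv : Ninv.IsUpperTriangular := hN'.of_mul_eq_one hN1 hNinvN
    have hblock := submatrix_succ_castSucc_conj hN' hNinv R
    set S1inv := N.submatrix Fin.castSucc Fin.castSucc * R1inv * Ninv.submatrix Fin.succ Fin.succ
    have hright : (N * R * Ninv).submatrix Fin.succ Fin.castSucc * S1inv = 1 := by
      rw [hblock]
      exact mul_mul_mul_eq_one (hN'.submatrix_succ_mul_eq_one hNNinv) hR1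
        (hN'.submatrix_castSucc_mul_eq_one hNinvN)
    have hleft : S1inv * (N * R * Ninv).submatrix Fin.succ Fin.castSucc = 1 := by
      rw [hblock]
      exact mul_mul_mul_eq_one (hNinv.submatrix_castSucc_mul_eq_one hNNinv) hR1'
        (hNinv.submatrix_succ_mul_eq_one hNinvN)
    exact ⟨S1inv, hright, hleft,
      deltaOf_conj_of_isUpperTriangular hN' hN1 hNinvN hR1 hR1' hleft⟩
  · let τ : S →+ S := AddMonoidHom.mk' σ hadd
    have hblock := antidiagTranspose_submatrix_succ_castSucc σ R
    refine ⟨antidiagTranspose σ R1inv, ?_, ?_, deltaOf_antidiagTranspose τ hσ R R1inv⟩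
    · show (antidiagTranspose σ R).submatrix Fin.succ Fin.castSucc * _ = 1
      rw [hblock]
      exact antidiagTranspose_mul_eq_one τ hσ hσ1 hR1'
    · show _ * (antidiagTranspose σ R).submatrix Fin.succ Fin.castSucc = 1
      rw [hblock]
      exact antidiagTranspose_mul_eq_one τ hσ hσ1 hR1

/-- (a) `Δ` is invariant under conjugation by an upper triangular matrix with
unity on the diagonal; (b) for an anti-isomorphism `*` of `R` and the induced
anti-isomorphism `T` of matrices, `(R^T)_{ij} = (R_{m+1-j, m+1-i})*`, one has
`Δ(R^T) = Δ(R)*`. -/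
theorem delta_invariance {S : Type*} [Ring S] (m : ℕ) (hm : 0 < m)
    (R : Matrix (Fin (m + 1)) (Fin (m + 1)) S)
    (R1inv : Matrix (Fin m) (Fin m) S)
    (hR1 : (Matrix.of fun i j : Fin m => R i.succ j.castSucc) * R1inv = 1)
    (hR1' : R1inv * (Matrix.of fun i j : Fin m => R i.succ j.castSucc) = 1) :
    (∀ (N Ninv : Matrix (Fin (m + 1)) (Fin (m + 1)) S),
      (∀ i j : Fin (m + 1), j < i → N i j = 0) → (∀ i, N i i = 1) →
      N * Ninv = 1 → Ninv * N = 1 →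
      ∃ S1inv : Matrix (Fin m) (Fin m) S,
        (Matrix.of fun i j : Fin m => (N * R * Ninv) i.succ j.castSucc) * S1inv = 1
        ∧ S1inv * (Matrix.of fun i j : Fin m => (N * R * Ninv) i.succ j.castSucc) = 1
        ∧ DeltaOf m (N * R * Ninv) S1inv = DeltaOf m R R1inv)
    ∧ (∀ σ : S → S, Function.Bijective σ → (∀ x y, σ (x + y) = σ x + σ y) →
        (∀ x y, σ (x * y) = σ y * σ x) → σ 1 = 1 →
      ∃ T1inv : Matrix (Fin m) (Fin m) S,
        (Matrix.of fun i j : Fin m =>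
            (Matrix.of fun i' j' : Fin (m + 1) => σ (R j'.rev i'.rev)) i.succ j.castSucc)
          * T1inv = 1
        ∧ T1inv * (Matrix.of fun i j : Fin m =>
            (Matrix.of fun i' j' : Fin (m + 1) => σ (R j'.rev i'.rev)) i.succ j.castSucc) = 1
        ∧ DeltaOf m (Matrix.of fun i' j' : Fin (m + 1) => σ (R j'.rev i'.rev)) T1inv
            = σ (DeltaOf m R R1inv)) :=
  delta_invariance_general m R R1inv hR1 hR1'
end
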